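/- (KL-controlled deviation of the mixed-policy return, pointwise form.) Suppose 0 ≤ r(s,a) ≤ R_max for all s ∈ S and a ∈ A, and suppose that for every state s, π^s(s)(a) > 0 whenever π^t(s)(a) > 0. Let π_mix be the mixed policy determined by teacher π^t, student π^s, and intervention indicator T : S → {0,1}. Then |J(π_mix) − J(π^t)| ≤ (√2 · R_max/(1−γ)²) · E_{s ~ ν^{π_mix,μ}}[ (1 − T(s)) · √(D_KL(π^t(s) ‖ π^s(s))) ]. -/

import Mathlib

open scoped BigOperators

section MDPDefs

variable {S A : Type*} [Fintype S] [Fintype A]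

/-- Expectation of a real-valued function under a PMF on a finite type (a finite sum). -/
noncomputable def pmfExp {X : Type*} [Fintype X] (p : PMF X) (f : X → ℝ) : ℝ :=
  ∑ x, (p x).toReal * f x

/-- Time-`t` state distribution `d_t^{π,μ}`:
`d_0 = μ` and `d_{t+1}` is obtained by sampling `x ~ d_t`, `a ~ π x`, `s' ~ P x a`. -/
noncomputable def stateDist (P : S → A → PMF S) (π : S → PMF A) (μ : PMF S) : ℕ → PMF S
  | 0 => μ
  | t + 1 => (stateDist P π μ t).bind fun x => (π x).bind fun a => P x a

/-- State value function `V^π(s) = Σ_t γ^t E_{x ~ d_t^{π, δ_s}} E_{a ~ π x}[r x a]`. -/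
noncomputable def Vval (P : S → A → PMF S) (r : S → A → ℝ) (γ : ℝ) (π : S → PMF A) (s : S) : ℝ :=
  ∑' t : ℕ, γ ^ t * pmfExp (stateDist P π (PMF.pure s) t) fun x => pmfExp (π x) fun a => r x a

/-- Return from an initial distribution: `J(π) = E_{s~μ}[V^π(s)]`. -/
noncomputable def Jret (P : S → A → PMF S) (r : S → A → ℝ) (γ : ℝ) (π : S → PMF A) (μ : PMF S) : ℝ :=
  pmfExp μ (Vval P r γ π)

/-- State-action value `Q^π(s,a) = r(s,a) + γ E_{s' ~ P s a}[V^π(s')]`. -/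
noncomputable def Qval (P : S → A → PMF S) (r : S → A → ℝ) (γ : ℝ) (π : S → PMF A)
    (s : S) (a : A) : ℝ :=
  r s a + γ * pmfExp (P s a) (Vval P r γ π)

/-- Advantage `A^π(s,a) = Q^π(s,a) - V^π(s)`. -/
noncomputable def Adv (P : S → A → PMF S) (r : S → A → ℝ) (γ : ℝ) (π : S → PMF A)
    (s : S) (a : A) : ℝ :=
  Qval P r γ π s a - Vval P r γ π s

/-- Discounted state-visitation distribution `ν^{π,μ}(s) = (1-γ) Σ_t γ^t d_t^{π,μ}(s)`. -/
noncomputable def visit (P : S → A → PMF S) (π : S → PMF A) (μ : PMF S) (γ : ℝ) (s : S) : ℝ :=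
  (1 - γ) * ∑' t : ℕ, γ ^ t * (stateDist P π μ t s).toReal

/-- `ℓ¹` distance between two PMFs on a finite type. -/
noncomputable def l1Dist {X : Type*} [Fintype X] (p q : PMF X) : ℝ :=
  ∑ x, |(p x).toReal - (q x).toReal|

/-- KL divergence `D_KL(p‖q) = Σ_{x : p x > 0} p x * log (p x / q x)` on a finite type. -/
noncomputable def pmfKL {X : Type*} [Fintype X] (p q : PMF X) : ℝ :=
  ∑ x, if p x = 0 then 0 else (p x).toReal * Real.log ((p x).toReal / (q x).toReal)

/-- Mixed behavior policy: teacher's action when the intervention indicator is on,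
student's action otherwise. -/
noncomputable def mixPolicy {S A : Type*} (πt πs : S → PMF A) (T : S → Bool) (s : S) : PMF A :=
  if T s then πt s else πs s

/-- Finite-horizon value of a deterministic policy, defined recursively:
`V_0(s) = r s (σ s)` and `V_{k+1}(s) = r s (σ s) + γ E_{s' ~ P s (σ s)}[V_k s']`. -/
noncomputable def Vfin (P : S → A → PMF S) (r : S → A → ℝ) (γ : ℝ) (σ : S → A) : ℕ → S → ℝ
  | 0, s => r s (σ s)
  | k + 1, s => r s (σ s) + γ * pmfExp (P s (σ s)) (Vfin P r γ σ k)

/-- Finite-horizon value of the switching (mixed) policy that at each step picks whichever of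
the two deterministic policies gives the larger continuation value. -/
noncomputable def Wswitch (P : S → A → PMF S) (r : S → A → ℝ) (γ : ℝ)
    (πt πs : S → A) : ℕ → S → ℝ
  | 0, s => max (r s (πt s)) (r s (πs s))
  | k + 1, s =>
      max (r s (πt s) + γ * pmfExp (P s (πt s)) (Wswitch P r γ πt πs k))
          (r s (πs s) + γ * pmfExp (P s (πs s)) (Wswitch P r γ πt πs k))

end MDPDefs

/-!
By the performance difference lemma, `(1 - γ) (J(π_mix) - J(π^t))` is the `ν^{π_mix,μ}`-average of
the expected teacher advantage `E_{a ~ π_mix(s)} A^{π^t}(s, a)`. This vanishes where the teacher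
acts. Where the student acts it equals `E_{π^s(s)} Q^{π^t} - E_{π^t(s)} Q^{π^t}`; as `Q^{π^t}` takes
values in an interval of length `R_max / (1 - γ)`, it is at most
`R_max / (2 (1 - γ)) · ‖π^t(s) - π^s(s)‖₁`. Finally `‖p - q‖₁ ≤ 2 √D_KL(p‖q)`, by Cauchy–Schwarz and
the Hellinger bound `∑ (√p - √q)² ≤ D_KL(p‖q)`, itself a consequence of `log x ≤ x - 1`.
-/

open Finset

namespace PMF

variable {X : Type*}

lemma toReal_le_one (p : PMF X) (x : X) : (p x).toReal ≤ 1 :=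
  ENNReal.toReal_le_of_le_ofReal zero_le_one (by simpa using p.coe_le_one x)

lemma sum_toReal [Fintype X] (p : PMF X) : ∑ x, (p x).toReal = 1 := by
  rw [← ENNReal.toReal_sum fun x _ => p.apply_ne_top x,
    ← tsum_fintype (L := SummationFilter.unconditional X), p.tsum_coe, ENNReal.toReal_one]

end PMF

section pmfExp

variable {X Y : Type*} [Fintype X] [Fintype Y]

lemma pmfExp_const (p : PMF X) (c : ℝ) : pmfExp p (fun _ => c) = c := by
  rw [pmfExp, ← sum_mul, p.sum_toReal, one_mul]

lemma pmfExp_add (p : PMF X) (f g : X → ℝ) :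
    pmfExp p (fun x => f x + g x) = pmfExp p f + pmfExp p g := by
  simp only [pmfExp, mul_add, sum_add_distrib]

lemma pmfExp_sub (p : PMF X) (f g : X → ℝ) :
    pmfExp p (fun x => f x - g x) = pmfExp p f - pmfExp p g := by
  simp only [pmfExp, mul_sub, sum_sub_distrib]

lemma pmfExp_const_mul (p : PMF X) (c : ℝ) (f : X → ℝ) :
    pmfExp p (fun x => c * f x) = c * pmfExp p f := by
  simp only [pmfExp, mul_sum, mul_left_comm]

lemma pmfExp_mono (p : PMF X) {f g : X → ℝ} (h : ∀ x, f x ≤ g x) : pmfExp p f ≤ pmfExp p g :=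
  sum_le_sum fun x _ => mul_le_mul_of_nonneg_left (h x) ENNReal.toReal_nonneg

lemma pmfExp_mem_Icc (p : PMF X) {f : X → ℝ} {lo hi : ℝ} (h : ∀ x, f x ∈ Set.Icc lo hi) :
    pmfExp p f ∈ Set.Icc lo hi := by
  constructor
  · simpa only [pmfExp_const] using pmfExp_mono p (g := f) (f := fun _ => lo) fun x => (h x).1
  · simpa only [pmfExp_const] using pmfExp_mono p (f := f) (g := fun _ => hi) fun x => (h x).2

lemma abs_pmfExp_le (p : PMF X) (f : X → ℝ) : |pmfExp p f| ≤ pmfExp p fun x => |f x| :=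
  (abs_sum_le_sum_abs _ _).trans_eq <| sum_congr rfl fun x _ => by
    rw [abs_mul, abs_of_nonneg ENNReal.toReal_nonneg]

lemma abs_pmfExp_le_sum_abs (p : PMF X) (f : X → ℝ) : |pmfExp p f| ≤ ∑ x, |f x| :=
  (abs_pmfExp_le p f).trans <| sum_le_sum fun x _ =>
    mul_le_of_le_one_left (abs_nonneg _) (p.toReal_le_one x)

lemma pmfExp_pure [DecidableEq X] (x : X) (f : X → ℝ) : pmfExp (PMF.pure x) f = f x := by
  rw [pmfExp, sum_eq_single x (fun y _ hy => by simp [PMF.pure_apply, hy]) (by simp)]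
  simp

lemma pmfExp_bind (p : PMF X) (q : X → PMF Y) (f : Y → ℝ) :
    pmfExp (p.bind q) f = pmfExp p fun x => pmfExp (q x) f := by
  have bind_toReal (y : Y) : ((p.bind q) y).toReal = ∑ x, (p x).toReal * (q x y).toReal := by
    rw [PMF.bind_apply, tsum_fintype, ENNReal.toReal_sum fun x _ =>
      ENNReal.mul_ne_top (p.apply_ne_top x) ((q x).apply_ne_top y)]
    simp only [ENNReal.toReal_mul]
  simp only [pmfExp, bind_toReal, sum_mul, mul_sum, mul_assoc]
  exact sum_comm

lemma abs_pmfExp_sub_pmfExp_le (p q : PMF X) {f : X → ℝ} {lo hi : ℝ}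
    (hf : ∀ x, f x ∈ Set.Icc lo hi) :
    |pmfExp p f - pmfExp q f| ≤ (hi - lo) / 2 * l1Dist p q := by
  set c := (lo + hi) / 2 with hc
  -- centring `f` at the midpoint of its range halves the constant
  have hcentre : pmfExp p f - pmfExp q f = ∑ x, ((p x).toReal - (q x).toReal) * (f x - c) := by
    have h := congrArg₂ (· - ·) (pmfExp_sub p f fun _ => c) (pmfExp_sub q f fun _ => c)
    simp only [pmfExp_const, sub_sub_sub_cancel_right] at h
    rw [← h, pmfExp, pmfExp, ← sum_sub_distrib]
    exact sum_congr rfl fun x _ => by ring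
  rw [hcentre, l1Dist, mul_sum]
  refine (abs_sum_le_sum_abs _ _).trans (sum_le_sum fun x _ => ?_)
  rw [abs_mul, mul_comm]
  refine mul_le_mul_of_nonneg_right ?_ (abs_nonneg _)
  rw [abs_le]
  constructor <;> linarith [(hf x).1, (hf x).2, hc]

end pmfExp

section WeakPinsker

lemma sq_sqrt_sub_sqrt_le_mul_log_div {p q : ℝ} (hp : 0 < p) (hq : 0 < q) :
    (√p - √q) ^ 2 ≤ p * Real.log (p / q) - p + q := by
  obtain ⟨a, ha, rfl⟩ : ∃ a, 0 < a ∧ a ^ 2 = p := ⟨√p, by positivity, Real.sq_sqrt hp.le⟩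
  obtain ⟨b, hb, rfl⟩ : ∃ b, 0 < b ∧ b ^ 2 = q := ⟨√q, by positivity, Real.sq_sqrt hq.le⟩
  have hlog : 1 - b / a ≤ Real.log (a / b) := by
    simpa using Real.one_sub_inv_le_log_of_pos (div_pos ha hb)
  rw [Real.sqrt_sq ha.le, Real.sqrt_sq hb.le, ← div_pow, Real.log_pow]
  have hexpand : a ^ 2 * (1 - b / a) = a ^ 2 - a * b := by field_simp
  nlinarith [mul_le_mul_of_nonneg_left hlog (sq_nonneg a)]

variable {X : Type*} [Fintype X]

lemma sum_sq_sqrt_sub_sqrt_le_pmfKL (p q : PMF X) (habs : ∀ x, 0 < p x → 0 < q x) :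
    ∑ x, (√(p x).toReal - √(q x).toReal) ^ 2 ≤ pmfKL p q := by
  have hKL : pmfKL p q = ∑ x, ((if p x = 0 then 0 else
      (p x).toReal * Real.log ((p x).toReal / (q x).toReal)) - (p x).toReal + (q x).toReal) := by
    rw [sum_add_distrib, sum_sub_distrib, p.sum_toReal, q.sum_toReal, pmfKL]
    ring
  rw [hKL]
  refine sum_le_sum fun x _ => ?_
  by_cases hpx : p x = 0
  · simp [hpx, Real.sq_sqrt ENNReal.toReal_nonneg]
  · rw [if_neg hpx]
    have hp : 0 < p x := pos_iff_ne_zero.2 hpx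
    exact sq_sqrt_sub_sqrt_le_mul_log_div (ENNReal.toReal_pos hpx (p.apply_ne_top x))
      (ENNReal.toReal_pos (habs x hp).ne' (q.apply_ne_top x))

lemma l1Dist_le_two_mul_sqrt_pmfKL (p q : PMF X) (habs : ∀ x, 0 < p x → 0 < q x) :
    l1Dist p q ≤ 2 * √(pmfKL p q) := by
  set u : X → ℝ := fun x => √(p x).toReal
  set v : X → ℝ := fun x => √(q x).toReal
  have hu (x : X) : u x ^ 2 = (p x).toReal := Real.sq_sqrt ENNReal.toReal_nonneg
  have hv (x : X) : v x ^ 2 = (q x).toReal := Real.sq_sqrt ENNReal.toReal_nonneg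
  have hfactor : l1Dist p q = ∑ x, |u x - v x| * (u x + v x) := by
    refine sum_congr rfl fun x _ => ?_
    rw [← hu, ← hv, sq_sub_sq, abs_mul, mul_comm,
      abs_of_nonneg (add_nonneg (Real.sqrt_nonneg _) (Real.sqrt_nonneg _))]
  have hsum_add_sq : ∑ x, (u x + v x) ^ 2 ≤ 4 := by
    calc ∑ x, (u x + v x) ^ 2 ≤ ∑ x, 2 * ((p x).toReal + (q x).toReal) :=
          sum_le_sum fun x _ => by rw [← hu, ← hv]; nlinarith [sq_nonneg (u x - v x)]
      _ = 4 := by rw [← mul_sum, sum_add_distrib, p.sum_toReal, q.sum_toReal]; norm_num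
  calc l1Dist p q ≤ √(∑ x, |u x - v x| ^ 2) * √(∑ x, (u x + v x) ^ 2) :=
        hfactor.trans_le (Real.sum_mul_le_sqrt_mul_sqrt _ _ _)
    _ ≤ √(pmfKL p q) * √4 := by
        gcongr
        simpa only [sq_abs] using sum_sq_sqrt_sub_sqrt_le_pmfKL p q habs
    _ = 2 * √(pmfKL p q) := by
        rw [show (4 : ℝ) = 2 ^ 2 by norm_num, Real.sqrt_sq zero_le_two, mul_comm]

end WeakPinsker

section Discounted

variable {γ : ℝ}

lemma summable_pow_mul_of_abs_le (hγ0 : 0 ≤ γ) (hγ1 : γ < 1) {g : ℕ → ℝ} {C : ℝ}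
    (hg : ∀ t, |g t| ≤ C) : Summable fun t => γ ^ t * g t :=
  .of_norm_bounded ((summable_geometric_of_lt_one hγ0 hγ1).mul_right C) fun t => by
    rw [norm_mul, norm_pow, Real.norm_of_nonneg hγ0, Real.norm_eq_abs]
    exact mul_le_mul_of_nonneg_left (hg t) (pow_nonneg hγ0 t)

lemma tsum_pow_mul_mem_Icc (hγ0 : 0 ≤ γ) (hγ1 : γ < 1) {g : ℕ → ℝ} {lo hi : ℝ}
    (hg : ∀ t, g t ∈ Set.Icc lo hi) :
    ∑' t, γ ^ t * g t ∈ Set.Icc (lo / (1 - γ)) (hi / (1 - γ)) := by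
  have hgeom (c : ℝ) : HasSum (fun t => γ ^ t * c) (c / (1 - γ)) := by
    simpa only [div_eq_inv_mul, mul_comm c] using
      (hasSum_geometric_of_lt_one hγ0 hγ1).mul_right c
  have hsum : Summable fun t => γ ^ t * g t :=
    summable_pow_mul_of_abs_le hγ0 hγ1 (C := max |lo| |hi|) fun t =>
      abs_le_max_abs_abs (hg t).1 (hg t).2
  exact ⟨hasSum_le (fun t => mul_le_mul_of_nonneg_left (hg t).1 (pow_nonneg hγ0 t))
      (hgeom lo) hsum.hasSum,
    hasSum_le (fun t => mul_le_mul_of_nonneg_left (hg t).2 (pow_nonneg hγ0 t))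
      hsum.hasSum (hgeom hi)⟩

lemma summable_pow_mul_pmfExp {X : Type*} [Fintype X] (hγ0 : 0 ≤ γ) (hγ1 : γ < 1)
    (d : ℕ → PMF X) (f : X → ℝ) : Summable fun t => γ ^ t * pmfExp (d t) f :=
  summable_pow_mul_of_abs_le hγ0 hγ1 fun t => abs_pmfExp_le_sum_abs (d t) f

end Discounted

section MDP

variable {S A : Type*} (P : S → A → PMF S) (r : S → A → ℝ) (π : S → PMF A) {γ : ℝ}

lemma stateDist_bind {B : Type*} (p : PMF B) (q : B → PMF S) (t : ℕ) :
    stateDist P π (p.bind q) t = p.bind fun b => stateDist P π (q b) t := by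
  induction t with
  | zero => rfl
  | succ t ih => rw [stateDist, ih, PMF.bind_bind]; rfl

lemma stateDist_eq_bind_pure (μ : PMF S) (t : ℕ) :
    stateDist P π μ t = μ.bind fun s => stateDist P π (PMF.pure s) t := by
  conv_lhs => rw [← PMF.bind_pure μ]
  exact stateDist_bind P π μ PMF.pure t

lemma stateDist_succ' (μ : PMF S) (t : ℕ) :
    stateDist P π μ (t + 1) = stateDist P π (μ.bind fun x => (π x).bind fun a => P x a) t := by
  induction t with
  | zero => rfl
  | succ t ih => rw [stateDist, ih, stateDist]

lemma visit_nonneg (hγ0 : 0 ≤ γ) (hγ1 : γ ≤ 1) (μ : PMF S) (s : S) : 0 ≤ visit P π μ γ s :=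
  mul_nonneg (sub_nonneg.2 hγ1) <|
    tsum_nonneg fun t => mul_nonneg (pow_nonneg hγ0 t) ENNReal.toReal_nonneg

variable [Fintype S]

lemma sum_visit_mul (hγ0 : 0 ≤ γ) (hγ1 : γ < 1) (μ : PMF S) (f : S → ℝ) :
    ∑ s, visit P π μ γ s * f s =
      (1 - γ) * ∑' t, γ ^ t * pmfExp (stateDist P π μ t) f := by
  have hsummable (s : S) : Summable fun t => γ ^ t * ((stateDist P π μ t s).toReal * f s) :=
    summable_pow_mul_of_abs_le hγ0 hγ1 fun t => by
      rw [abs_mul, abs_of_nonneg ENNReal.toReal_nonneg]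
      exact mul_le_of_le_one_left (abs_nonneg _) (PMF.toReal_le_one _ s)
  calc ∑ s, visit P π μ γ s * f s
      = (1 - γ) * ∑ s, ∑' t, γ ^ t * ((stateDist P π μ t s).toReal * f s) := by
        simp only [visit, mul_sum, mul_assoc, ← tsum_mul_right]
    _ = _ := by
        rw [← Summable.tsum_finsetSum fun s _ => hsummable s]
        simp only [pmfExp, mul_sum]

variable [Fintype A]

lemma Jret_eq_tsum (hγ0 : 0 ≤ γ) (hγ1 : γ < 1) (μ : PMF S) :
    Jret P r γ π μ =
      ∑' t, γ ^ t * pmfExp (stateDist P π μ t) fun x => pmfExp (π x) fun a => r x a := by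
  have hsummable (s : S) := (summable_pow_mul_pmfExp hγ0 hγ1 (stateDist P π (PMF.pure s))
    fun x => pmfExp (π x) fun a => r x a).mul_left (μ s).toReal
  calc Jret P r γ π μ
      = ∑ s, ∑' t, (μ s).toReal * (γ ^ t * pmfExp (stateDist P π (PMF.pure s) t)
          fun x => pmfExp (π x) fun a => r x a) := by
        simp only [Jret, Vval, pmfExp, tsum_mul_left]
    _ = _ := by
        rw [← Summable.tsum_finsetSum fun s _ => hsummable s]
        refine tsum_congr fun t => ?_
        rw [stateDist_eq_bind_pure P π μ, pmfExp_bind, ← pmfExp_const_mul]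
        simp only [pmfExp, mul_sum, mul_left_comm]

lemma Jret_eq_add_Jret_bind (hγ0 : 0 ≤ γ) (hγ1 : γ < 1) (μ : PMF S) :
    Jret P r γ π μ = pmfExp μ (fun x => pmfExp (π x) fun a => r x a) +
      γ * Jret P r γ π (μ.bind fun x => (π x).bind fun a => P x a) := by
  rw [Jret_eq_tsum P r π hγ0 hγ1, Jret_eq_tsum P r π hγ0 hγ1,
    (summable_pow_mul_pmfExp hγ0 hγ1 _ _).tsum_eq_zero_add, ← tsum_mul_left]
  congr 1
  · rw [pow_zero, one_mul]; rfl
  · exact tsum_congr fun t => by rw [stateDist_succ', pow_succ]; ring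

lemma Vval_eq_pmfExp_Qval (hγ0 : 0 ≤ γ) (hγ1 : γ < 1) (s : S) :
    Vval P r γ π s = pmfExp (π s) (Qval P r γ π s) := by
  classical
  have h := Jret_eq_add_Jret_bind P r π hγ0 hγ1 (PMF.pure s)
  rw [Jret, Jret, pmfExp_pure, pmfExp_pure, PMF.pure_bind, pmfExp_bind, ← pmfExp_const_mul,
    ← pmfExp_add] at h
  exact h

lemma pmfExp_Adv_self (hγ0 : 0 ≤ γ) (hγ1 : γ < 1) (s : S) :
    pmfExp (π s) (Adv P r γ π s) = 0 := by
  rw [show Adv P r γ π s = fun a => Qval P r γ π s a - Vval P r γ π s from rfl, pmfExp_sub,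
    pmfExp_const, ← Vval_eq_pmfExp_Qval P r π hγ0 hγ1, sub_self]

lemma Vval_mem_Icc {lo hi : ℝ} (hr : ∀ s a, r s a ∈ Set.Icc lo hi) (hγ0 : 0 ≤ γ) (hγ1 : γ < 1)
    (s : S) :
    Vval P r γ π s ∈ Set.Icc (lo / (1 - γ)) (hi / (1 - γ)) :=
  tsum_pow_mul_mem_Icc hγ0 hγ1 fun _ =>
    pmfExp_mem_Icc _ fun x => pmfExp_mem_Icc _ fun a => hr x a

lemma Qval_mem_Icc {lo hi : ℝ} (hr : ∀ s a, r s a ∈ Set.Icc lo hi) (hγ0 : 0 ≤ γ) (hγ1 : γ < 1)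
    (s : S) (a : A) :
    Qval P r γ π s a ∈ Set.Icc (lo / (1 - γ)) (hi / (1 - γ)) := by
  have hV := pmfExp_mem_Icc (P s a) fun x => Vval_mem_Icc P r π hr hγ0 hγ1 x
  have hfix (c : ℝ) : c + γ * (c / (1 - γ)) = c / (1 - γ) := by
    field_simp [(sub_pos.2 hγ1).ne']
    ring
  rw [Qval, ← hfix lo, ← hfix hi]
  exact ⟨add_le_add (hr s a).1 (mul_le_mul_of_nonneg_left hV.1 hγ0),
    add_le_add (hr s a).2 (mul_le_mul_of_nonneg_left hV.2 hγ0)⟩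

/-- The performance difference lemma. -/
lemma Jret_sub_Jret (hγ0 : 0 ≤ γ) (hγ1 : γ < 1) (π' : S → PMF A) (μ : PMF S) :
    Jret P r γ π μ - Jret P r γ π' μ =
      ∑' t, γ ^ t * pmfExp (stateDist P π μ t) fun x => pmfExp (π x) (Adv P r γ π' x) := by
  set d := stateDist P π μ
  set R : S → ℝ := fun x => pmfExp (π x) fun a => r x a
  set V := Vval P r γ π'
  have hstep (t : ℕ) : pmfExp (d t) (fun x => pmfExp (π x) (Adv P r γ π' x)) =
      pmfExp (d t) R + γ * pmfExp (d (t + 1)) V - pmfExp (d t) V := by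
    have hAdv (x : S) : pmfExp (π x) (Adv P r γ π' x) =
        R x + γ * pmfExp ((π x).bind fun a => P x a) V - V x := by
      rw [show Adv P r γ π' x = fun a => r x a + γ * pmfExp (P x a) V - V x from rfl,
        pmfExp_sub, pmfExp_const, pmfExp_add, pmfExp_const_mul, pmfExp_bind]
    rw [show d (t + 1) = (d t).bind fun x => (π x).bind fun a => P x a from rfl, pmfExp_bind,
      ← pmfExp_const_mul, ← pmfExp_add, ← pmfExp_sub]
    exact congrArg _ (funext hAdv)
  have hR := summable_pow_mul_pmfExp hγ0 hγ1 d R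
  have hV := summable_pow_mul_pmfExp hγ0 hγ1 d V
  have hV' := (summable_nat_add_iff 1).2 hV
  have hJ' : Jret P r γ π' μ = γ ^ 0 * pmfExp (d 0) V := by rw [pow_zero, one_mul]; rfl
  calc Jret P r γ π μ - Jret P r γ π' μ
      = ∑' t, γ ^ t * pmfExp (d t) R +
          (∑' t, γ ^ (t + 1) * pmfExp (d (t + 1)) V - ∑' t, γ ^ t * pmfExp (d t) V) := by
        rw [hV.tsum_eq_zero_add, Jret_eq_tsum P r π hγ0 hγ1, hJ']
        ring
    _ = ∑' t, (γ ^ t * pmfExp (d t) R + γ ^ (t + 1) * pmfExp (d (t + 1)) V -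
          γ ^ t * pmfExp (d t) V) := by
        rw [(hR.add hV').tsum_sub hV, hR.tsum_add hV']
        ring
    _ = _ := tsum_congr fun t => by rw [hstep, pow_succ]; ring

lemma one_sub_mul_Jret_sub_Jret (hγ0 : 0 ≤ γ) (hγ1 : γ < 1) (π' : S → PMF A) (μ : PMF S) :
    (1 - γ) * (Jret P r γ π μ - Jret P r γ π' μ) =
      ∑ s, visit P π μ γ s * pmfExp (π s) (Adv P r γ π' s) := by
  rw [Jret_sub_Jret P r π hγ0 hγ1, sum_visit_mul P π hγ0 hγ1]

lemma abs_pmfExp_Adv_mixPolicy_le {lo hi : ℝ} (hr : ∀ s a, r s a ∈ Set.Icc lo hi)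
    (hγ0 : 0 ≤ γ) (hγ1 : γ < 1) (πt πs : S → PMF A) (T : S → Bool) (s : S)
    (habs : ∀ a, 0 < πt s a → 0 < πs s a) :
    |pmfExp (mixPolicy πt πs T s) (Adv P r γ πt s)| ≤
      (hi - lo) / (1 - γ) * ((1 - if T s then 1 else 0) * √(pmfKL (πt s) (πs s))) := by
  cases hT : T s
  · obtain ⟨a, -⟩ := (πt s).support_nonempty
    have hwidth : 0 ≤ (hi / (1 - γ) - lo / (1 - γ)) / 2 := by
      have := (hr s a).1.trans (hr s a).2
      have := sub_pos.2 hγ1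
      rw [← sub_div]
      positivity
    rw [mixPolicy, hT, if_neg Bool.false_ne_true,
      show Adv P r γ πt s = fun a => Qval P r γ πt s a - Vval P r γ πt s from rfl, pmfExp_sub,
      pmfExp_const, Vval_eq_pmfExp_Qval P r πt hγ0 hγ1, abs_sub_comm]
    calc _ ≤ (hi / (1 - γ) - lo / (1 - γ)) / 2 * l1Dist (πt s) (πs s) :=
          abs_pmfExp_sub_pmfExp_le _ _ (Qval_mem_Icc P r πt hr hγ0 hγ1 s)
      _ ≤ (hi / (1 - γ) - lo / (1 - γ)) / 2 * (2 * √(pmfKL (πt s) (πs s))) :=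
          mul_le_mul_of_nonneg_left (l1Dist_le_two_mul_sqrt_pmfKL _ _ habs) hwidth
      _ = _ := by simp only [if_false, Bool.false_eq_true]; ring
  · simp [mixPolicy, hT, pmfExp_Adv_self P r πt hγ0 hγ1]

end MDP

theorem mix_return_kl_bound_general {S A : Type*} [Fintype S] [Fintype A]
    (P : S → A → PMF S) (r : S → A → ℝ) (γ : ℝ) (hγ0 : 0 ≤ γ) (hγ1 : γ < 1)
    (Rmax : ℝ) (hr : ∀ (s : S) (a : A), 0 ≤ r s a ∧ r s a ≤ Rmax)
    (πt πs : S → PMF A) (habs : ∀ (s : S) (a : A), 0 < πt s a → 0 < πs s a)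
    (T : S → Bool) (μ : PMF S) :
    |Jret P r γ (mixPolicy πt πs T) μ - Jret P r γ πt μ| ≤
      Real.sqrt 2 * Rmax / (1 - γ) ^ 2 *
        ∑ s, visit P (mixPolicy πt πs T) μ γ s *
          ((1 - (if T s then (1 : ℝ) else 0)) * Real.sqrt (pmfKL (πt s) (πs s))) := by
  obtain ⟨s₀, -⟩ := μ.support_nonempty
  obtain ⟨a₀, -⟩ := (πt s₀).support_nonempty
  have hRmax : 0 ≤ Rmax := (hr s₀ a₀).1.trans (hr s₀ a₀).2
  have h1γ : 0 < 1 - γ := sub_pos.2 hγ1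
  set ν := visit P (mixPolicy πt πs T) μ γ
  set k : S → ℝ := fun s => (1 - if T s then 1 else 0) * √(pmfKL (πt s) (πs s))
  have hν (s : S) : 0 ≤ ν s := visit_nonneg P _ hγ0 hγ1.le μ s
  have hk : 0 ≤ ∑ s, ν s * k s :=
    sum_nonneg fun s _ => mul_nonneg (hν s) <|
      mul_nonneg (by split_ifs <;> norm_num) (Real.sqrt_nonneg _)
  have hpdl := one_sub_mul_Jret_sub_Jret P r (mixPolicy πt πs T) hγ0 hγ1 πt μ
  calc |Jret P r γ (mixPolicy πt πs T) μ - Jret P r γ πt μ|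
      = (1 - γ)⁻¹ * |∑ s, ν s * pmfExp (mixPolicy πt πs T s) (Adv P r γ πt s)| := by
        rw [← hpdl, abs_mul, abs_of_pos h1γ, inv_mul_cancel_left₀ h1γ.ne']
    _ ≤ (1 - γ)⁻¹ * ∑ s, ν s * ((Rmax - 0) / (1 - γ) * k s) := by
        gcongr
        refine (abs_sum_le_sum_abs _ _).trans (sum_le_sum fun s _ => ?_)
        rw [abs_mul, abs_of_nonneg (hν s)]
        exact mul_le_mul_of_nonneg_left
          (abs_pmfExp_Adv_mixPolicy_le P r hr hγ0 hγ1 πt πs T s (habs s)) (hν s)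
    _ = Rmax / (1 - γ) ^ 2 * ∑ s, ν s * k s := by
        simp only [sub_zero, mul_sum]
        refine sum_congr rfl fun s _ => ?_
        field_simp
    _ ≤ Real.sqrt 2 * Rmax / (1 - γ) ^ 2 * ∑ s, ν s * k s := by
        gcongr
        exact le_mul_of_one_le_left hRmax (Real.one_le_sqrt.2 one_le_two)

/-- KL-controlled deviation of the mixed-policy return, pointwise form: if `0 ≤ r ≤ R_max`
and the student policy dominates the teacher policy (`π^s(s)(a) > 0` whenever
`π^t(s)(a) > 0`), then
`|J(π_mix) − J(π^t)| ≤ (√2 R_max/(1−γ)²) E_{s ~ ν^{π_mix,μ}}[(1−T(s)) √(D_KL(π^t(s)‖π^s(s)))]`. -/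
theorem mix_return_kl_bound {S A : Type*} [Fintype S] [Nonempty S] [Fintype A] [Nonempty A]
    (P : S → A → PMF S) (r : S → A → ℝ) (γ : ℝ) (hγ0 : 0 ≤ γ) (hγ1 : γ < 1)
    (Rmax : ℝ) (hr : ∀ (s : S) (a : A), 0 ≤ r s a ∧ r s a ≤ Rmax)
    (πt πs : S → PMF A) (habs : ∀ (s : S) (a : A), 0 < πt s a → 0 < πs s a)
    (T : S → Bool) (μ : PMF S) :
    |Jret P r γ (mixPolicy πt πs T) μ - Jret P r γ πt μ| ≤
      Real.sqrt 2 * Rmax / (1 - γ) ^ 2 *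
        ∑ s, visit P (mixPolicy πt πs T) μ γ s *
          ((1 - (if T s then (1 : ℝ) else 0)) * Real.sqrt (pmfKL (πt s) (πs s))) :=
  mix_return_kl_bound_general P r γ hγ0 hγ1 Rmax hr πt πs habs T μ
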